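/- arXiv:1304.0174 — 2 statements merged into one kernel-verified Lean document; each statement's English description precedes it below -/
import Mathlib

section
/- For every nonzero t ∈ Λ²V, the K-subspace T := {x ∈ V | x ∧ t = 0} of V satisfies finrank T ∈ {0, 2}; moreover finrank T = 2 if and only if t is decomposable, i.e. t = q ∧ r for some q, r ∈ V. -/
/-!
If `x ≠ 0` and `x ∧ t = 0`, contracting with a functional `ξ` with `ξ x = 1` gives
`t = x ∧ (ξ ⌋ t)`, and `ξ ⌋ t` has degree one, so `t` is decomposable. Conversely, if
`t = q ∧ r ≠ 0` then `x ∧ q ∧ r = 0` exactly when `x, q, r` are linearly dependent, so the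
kernel is `span {q, r}`, of dimension two.
-/

open TensorProduct

variable (K V : Type*) [Field K] [AddCommGroup V] [Module K V]

/-- The wedge `q ∧ r` of two vectors, as an element of the second exterior power. -/
def wedge2 (q r : V) : ⋀[K]^2 V :=
  ⟨ExteriorAlgebra.ιMulti K 2 ![q, r],
    ExteriorAlgebra.ιMulti_range K 2 (Set.mem_range_self _)⟩

/-- The wedge `p ∧ q ∧ r` of three vectors, as an element of the third exterior power. -/
def wedge3 (p q r : V) : ⋀[K]^3 V :=
  ⟨ExteriorAlgebra.ιMulti K 3 ![p, q, r],
    ExteriorAlgebra.ιMulti_range K 3 (Set.mem_range_self _)⟩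

namespace ExteriorAlgebra

section CommRing

variable {R M : Type*} [CommRing R] [AddCommGroup M] [Module R M]

theorem contractLeft_ιMulti_mem_exteriorPower (d : Module.Dual R M) (n : ℕ)
    (v : Fin (n + 1) → M) :
    CliffordAlgebra.contractLeft (Q := 0) d (ιMulti R (n + 1) v) ∈ ⋀[R]^n M := by
  induction n with
  | zero => simp [CliffordAlgebra.contractLeft_ι]
  | succ n ih =>
    rw [ιMulti_succ_apply, CliffordAlgebra.contractLeft_ι_mul]
    refine Submodule.sub_mem _ (Submodule.smul_mem _ _ (ιMulti_range R _ ⟨_, rfl⟩)) ?_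
    have hι : ι R (v 0) ∈ ⋀[R]^1 M := by simp [pow_one]
    simpa only [add_comm 1 n] using SetLike.mul_mem_graded hι (ih (Matrix.vecTail v))

theorem contractLeft_mem_exteriorPower (d : Module.Dual R M) {n : ℕ} {x : ExteriorAlgebra R M}
    (hx : x ∈ ⋀[R]^(n + 1) M) : CliffordAlgebra.contractLeft d x ∈ ⋀[R]^n M := by
  rw [← ιMulti_span_fixedDegree] at hx
  induction hx using Submodule.span_induction with
  | mem _ h => obtain ⟨v, rfl⟩ := h; exact contractLeft_ιMulti_mem_exteriorPower d n v
  | zero => simp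
  | add _ _ _ _ h₁ h₂ => rw [map_add]; exact add_mem h₁ h₂
  | smul a _ _ h => rw [map_smul]; exact Submodule.smul_mem _ a h

end CommRing

variable {K V}

theorem ιMulti_ne_zero_iff_linearIndependent {n : ℕ} {v : Fin n → V} :
    ιMulti K n v ≠ 0 ↔ LinearIndependent K v := by
  refine ⟨not_imp_comm.mp ((ιMulti K n).map_linearDependent v), fun hv => ?_⟩
  have := (exteriorPower.ιMulti_family_linearIndependent_field (n := n) hv).ne_zero
    (Set.powersetCard.ofFinEmbEquiv (OrderIso.refl (Fin n)).toOrderEmbedding)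
  rwa [Ne, ← Submodule.coe_eq_zero, exteriorPower.ιMulti_family, Equiv.symm_apply_apply] at this

theorem exists_eq_ι_mul_of_ι_mul_eq_zero {x : V} (hx : x ≠ 0) {n : ℕ} {t : ExteriorAlgebra K V}
    (ht : t ∈ ⋀[K]^(n + 1) V) (hxt : ι K x * t = 0) : ∃ s ∈ ⋀[K]^n V, t = ι K x * s := by
  obtain ⟨d, hd⟩ := Module.Projective.exists_dual_eq_one K hx
  refine ⟨CliffordAlgebra.contractLeft d t, contractLeft_mem_exteriorPower d ht, ?_⟩
  have := congrArg (CliffordAlgebra.contractLeft d) hxt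
  rwa [CliffordAlgebra.contractLeft_ι_mul, hd, one_smul, map_zero, sub_eq_zero] at this

variable (K) in
def wedgeKernel (a : ExteriorAlgebra K V) : Submodule K V :=
  LinearMap.ker (LinearMap.mulRight K a ∘ₗ ι K)

theorem mem_wedgeKernel {a : ExteriorAlgebra K V} {x : V} :
    x ∈ wedgeKernel K a ↔ ι K x * a = 0 :=
  Iff.rfl

theorem exists_eq_ι_mul_ι_of_wedgeKernel_ne_bot {t : ExteriorAlgebra K V} (ht : t ∈ ⋀[K]^2 V)
    (h : wedgeKernel K t ≠ ⊥) : ∃ q r : V, t = ι K q * ι K r := by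
  obtain ⟨x, hxt, hx⟩ := Submodule.exists_mem_ne_zero_of_ne_bot h
  obtain ⟨s, hs, rfl⟩ := exists_eq_ι_mul_of_ι_mul_eq_zero hx ht hxt
  obtain ⟨y, rfl⟩ : s ∈ LinearMap.range (ι K) := by rwa [← pow_one (LinearMap.range (ι K))]
  exact ⟨x, y, rfl⟩

theorem linearIndependent_of_ι_mul_ι_ne_zero {q r : V} (h : ι K q * ι K r ≠ 0) :
    LinearIndependent K ![q, r] :=
  ιMulti_ne_zero_iff_linearIndependent.mp (by simpa using h)

theorem wedgeKernel_ι_mul_ι {q r : V} (h : ι K q * ι K r ≠ 0) :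
    wedgeKernel K (ι K q * ι K r) = Submodule.span K (Set.range ![q, r]) := by
  ext z
  have hz : ι K z * (ι K q * ι K r) = ιMulti K 3 ![z, q, r] := by simp
  rw [mem_wedgeKernel, hz, ← not_ne_iff, ιMulti_ne_zero_iff_linearIndependent, Matrix.vecCons,
    linearIndependent_finCons]
  simp [linearIndependent_of_ι_mul_ι_ne_zero h]

theorem finrank_wedgeKernel_ι_mul_ι {q r : V} (h : ι K q * ι K r ≠ 0) :
    Module.finrank K (wedgeKernel K (ι K q * ι K r)) = 2 := by
  rw [wedgeKernel_ι_mul_ι h, finrank_span_eq_card (linearIndependent_of_ι_mul_ι_ne_zero h),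
    Fintype.card_fin]

end ExteriorAlgebra

open ExteriorAlgebra

variable {K V}

theorem coe_wedge2 (q r : V) : (wedge2 K V q r : ExteriorAlgebra K V) = ι K q * ι K r := by
  simp [wedge2]

theorem ker_flip_eq_wedgeKernel (w : V →ₗ[K] ↥(⋀[K]^2 V) →ₗ[K] ↥(⋀[K]^3 V))
    (hw : ∀ p q r : V, w p (wedge2 K V q r) = wedge3 K V p q r) (t : ⋀[K]^2 V) :
    LinearMap.ker (w.flip t) = wedgeKernel K (t : ExteriorAlgebra K V) := by
  have hw' : ∀ x, (⋀[K]^3 V).subtype ∘ₗ w x =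
      LinearMap.mulLeft K (ι K x) ∘ₗ (⋀[K]^2 V).subtype := by
    intro x
    ext v
    have hv : exteriorPower.ιMulti K 2 v = wedge2 K V (v 0) (v 1) := by
      ext; simp [wedge2, Matrix.vecTail]
    simp [hv, hw, wedge3, coe_wedge2]
  ext x
  rw [LinearMap.mem_ker, mem_wedgeKernel, ← Submodule.coe_eq_zero, LinearMap.flip_apply]
  exact Iff.of_eq (congrArg (· = 0) (LinearMap.congr_fun (hw' x) t))

theorem finrank_wedge_kernel_general
    (w : V →ₗ[K] ↥(⋀[K]^2 V) →ₗ[K] ↥(⋀[K]^3 V))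
    (hw : ∀ p q r : V, w p (wedge2 K V q r) = wedge3 K V p q r)
    (t : ⋀[K]^2 V) (ht : t ≠ 0) :
    Module.finrank K (LinearMap.ker (w.flip t)) ∈ ({0, 2} : Set ℕ) ∧
    (Module.finrank K (LinearMap.ker (w.flip t)) = 2 ↔
      ∃ q r : V, t = wedge2 K V q r) := by
  have ht' : (t : ExteriorAlgebra K V) ≠ 0 := by simpa using ht
  have hdec : (∃ q r : V, t = wedge2 K V q r) ↔
      ∃ q r : V, (t : ExteriorAlgebra K V) = ι K q * ι K r := by
    simp only [Subtype.ext_iff, coe_wedge2]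
  rw [ker_flip_eq_wedgeKernel w hw, hdec]
  by_cases hdecomp : ∃ q r : V, (t : ExteriorAlgebra K V) = ι K q * ι K r
  · obtain ⟨q, r, hqr⟩ := hdecomp
    rw [hqr, finrank_wedgeKernel_ι_mul_ι (hqr ▸ ht')]
    exact ⟨Or.inr rfl, iff_of_true rfl ⟨q, r, rfl⟩⟩
  · have hbot : wedgeKernel K (t : ExteriorAlgebra K V) = ⊥ := by
      by_contra hne
      exact hdecomp (exists_eq_ι_mul_ι_of_wedgeKernel_ne_bot t.2 hne)
    rw [hbot, finrank_bot]
    simp [hdecomp]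

/-- For nonzero `t ∈ Λ²V`, the subspace `T = {x ∈ V | x ∧ t = 0}` has dimension `0` or
`2`, and it has dimension `2` exactly when `t` is decomposable. Here the wedge
`V × Λ²V → Λ³V` is given as a bilinear map `w` with `w x (q ∧ r) = x ∧ q ∧ r`. -/
theorem finrank_wedge_kernel
    (hV : Module.finrank K V = 4)
    (w : V →ₗ[K] ↥(⋀[K]^2 V) →ₗ[K] ↥(⋀[K]^3 V))
    (hw : ∀ p q r : V, w p (wedge2 K V q r) = wedge3 K V p q r)
    (t : ⋀[K]^2 V) (ht : t ≠ 0) :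
    Module.finrank K (LinearMap.ker (w.flip t)) ∈ ({0, 2} : Set ℕ) ∧
    (Module.finrank K (LinearMap.ker (w.flip t)) = 2 ↔
      ∃ q r : V, t = wedge2 K V q r) :=
  finrank_wedge_kernel_general w hw t ht
end

section
/- Let α : F → F be a Plücker transformation and let M = F[P, ε] be a pencil of type 1 (so P ≤ ε with finrank P = 1, finrank ε = 3). Then α(M) is again a pencil of type 1, i.e. there exist a point P' and a plane ε' with P' ≤ ε' such that α(M) = F[P', ε']. Equivalently, no pencil of type 0 and no pencil of type 2 is mapped by α to a pencil of type 1. -/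
/-- A flag of a 3-dimensional projective space: a triple `(P, g, ε)` of subspaces of the
underlying 4-dimensional vector space `V` with `finrank P = 1`, `finrank g = 2`,
`finrank ε = 3` and `P ≤ g ≤ ε`. -/
structure ProjFlag (K : Type*) (V : Type*) [DivisionRing K] [AddCommGroup V]
    [Module K V] where
  pt : Submodule K V
  ln : Submodule K V
  pl : Submodule K V
  finrank_pt : Module.finrank K pt = 1
  finrank_ln : Module.finrank K ln = 2
  finrank_pl : Module.finrank K pl = 3
  pt_le_ln : pt ≤ ln
  ln_le_pl : ln ≤ pl

variable {K V : Type*} [DivisionRing K] [AddCommGroup V] [Module K V]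

/-- Two flags are related if they agree in at least two of their three components. -/
def ProjFlag.Related (Φ Ψ : ProjFlag K V) : Prop :=
  (Φ.pt = Ψ.pt ∧ Φ.ln = Ψ.ln) ∨ (Φ.pt = Ψ.pt ∧ Φ.pl = Ψ.pl) ∨ (Φ.ln = Ψ.ln ∧ Φ.pl = Ψ.pl)

/-- The set `F[g, ε]` of all flags with line component `g` and plane component `ε`. -/
def flagsOfLinePlane (g ε : Submodule K V) : Set (ProjFlag K V) :=
  {Φ : ProjFlag K V | Φ.ln = g ∧ Φ.pl = ε}

/-- The set `F[P, ε]` of all flags with point component `P` and plane component `ε`. -/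
def flagsOfPointPlane (P ε : Submodule K V) : Set (ProjFlag K V) :=
  {Φ : ProjFlag K V | Φ.pt = P ∧ Φ.pl = ε}

/-- The set `F[P, g]` of all flags with point component `P` and line component `g`. -/
def flagsOfPointLine (P g : Submodule K V) : Set (ProjFlag K V) :=
  {Φ : ProjFlag K V | Φ.pt = P ∧ Φ.ln = g}

/-- `M` is a pencil of type 0: `M = F[g, ε]` for a line `g` contained in a plane `ε`. -/
def IsPencil0 (M : Set (ProjFlag K V)) : Prop :=
  ∃ g ε : Submodule K V, Module.finrank K g = 2 ∧ Module.finrank K ε = 3 ∧ g ≤ ε ∧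
    M = flagsOfLinePlane g ε

/-- `M` is a pencil of type 1: `M = F[P, ε]` for a point `P` contained in a plane `ε`. -/
def IsPencil1 (M : Set (ProjFlag K V)) : Prop :=
  ∃ P ε : Submodule K V, Module.finrank K P = 1 ∧ Module.finrank K ε = 3 ∧ P ≤ ε ∧
    M = flagsOfPointPlane P ε

/-- `M` is a pencil of type 2: `M = F[P, g]` for a point `P` contained in a line `g`. -/
def IsPencil2 (M : Set (ProjFlag K V)) : Prop :=
  ∃ P g : Submodule K V, Module.finrank K P = 1 ∧ Module.finrank K g = 2 ∧ P ≤ g ∧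
    M = flagsOfPointLine P g

/-- `M` is a pencil (of type 0, 1 or 2). -/
def IsPencil (M : Set (ProjFlag K V)) : Prop :=
  IsPencil0 M ∨ IsPencil1 M ∨ IsPencil2 M


open Module

private lemma flag_eq {Φ Ψ : ProjFlag K V} (h1 : Φ.pt = Ψ.pt) (h2 : Φ.ln = Ψ.ln)
    (h3 : Φ.pl = Ψ.pl) : Φ = Ψ := by
  cases Φ; cases Ψ; simp_all

private lemma cliqueC {Ψ1 Ψ2 Ψ3 : ProjFlag K V} (hpt : Ψ1.pt = Ψ2.pt)
    (hpl : Ψ1.pl = Ψ2.pl) (hln : Ψ1.ln ≠ Ψ2.ln)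
    (h1 : Ψ3.Related Ψ1) (h2 : Ψ3.Related Ψ2) :
    Ψ3.pt = Ψ1.pt ∧ Ψ3.pl = Ψ1.pl := by
  rcases h1 with ⟨e1, e2⟩ | ⟨e1, e2⟩ | ⟨e1, e2⟩
  · rcases h2 with ⟨f1, f2⟩ | ⟨f1, f2⟩ | ⟨f1, f2⟩
    · exact absurd (e2.symm.trans f2) hln
    · exact ⟨e1, f2.trans hpl.symm⟩
    · exact absurd (e2.symm.trans f1) hln
  · exact ⟨e1, e2⟩
  · rcases h2 with ⟨f1, f2⟩ | ⟨f1, f2⟩ | ⟨f1, f2⟩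
    · exact absurd (e1.symm.trans f2) hln
    · exact ⟨f1.trans hpt.symm, e2⟩
    · exact absurd (e1.symm.trans f1) hln

private lemma exists_point_ne [FiniteDimensional K V] {P g : Submodule K V}
    (hP : finrank K P = 1) (hg : finrank K g = 2) (hle : P ≤ g) :
    ∃ Q : Submodule K V, finrank K Q = 1 ∧ Q ≤ g ∧ Q ≠ P := by
  have hlt : P < g := lt_of_le_of_ne hle (fun h => by rw [h] at hP; omega)
  obtain ⟨x, hxg, hxP⟩ := SetLike.exists_of_lt hlt
  have hx0 : x ≠ 0 := fun h => hxP (h ▸ P.zero_mem)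
  refine ⟨Submodule.span K {x}, finrank_span_singleton hx0, ?_, ?_⟩
  · rwa [Submodule.span_singleton_le_iff_mem]
  · intro h; exact hxP (h ▸ Submodule.mem_span_singleton_self x)

private lemma exists_plane_ne (hV : finrank K V = 4) {g ε : Submodule K V}
    (hg : finrank K g = 2) (hε : finrank K ε = 3) (hle : g ≤ ε) :
    ∃ δ : Submodule K V, finrank K δ = 3 ∧ g ≤ δ ∧ δ ≠ ε := by
  have : FiniteDimensional K V := FiniteDimensional.of_finrank_eq_succ (n := 3) hV
  have hεtop : ε ≠ ⊤ := fun h => by rw [h, finrank_top] at hε; omega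
  obtain ⟨x, -, hxε⟩ := SetLike.exists_of_lt hεtop.lt_top
  have hxg : x ∉ g := fun h => hxε (hle h)
  have hx0 : x ≠ 0 := fun h => hxε (h ▸ ε.zero_mem)
  have hdisj : g ⊓ Submodule.span K {x} = ⊥ :=
    disjoint_iff.mp (Submodule.disjoint_span_singleton.mpr (fun h => absurd h hxg))
  refine ⟨g ⊔ Submodule.span K {x}, ?_, le_sup_left, ?_⟩
  · have h2 := Submodule.finrank_sup_add_finrank_inf_eq g (Submodule.span K {x})
    rw [hdisj, finrank_bot, hg, finrank_span_singleton hx0] at h2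
    omega
  · intro h
    exact hxε (h ▸ Submodule.mem_sup_right (Submodule.mem_span_singleton_self x))

private lemma exists_two_lines [FiniteDimensional K V] {P ε : Submodule K V}
    (hP : finrank K P = 1) (hε : finrank K ε = 3) (hle : P ≤ ε) :
    ∃ a b : Submodule K V, finrank K a = 2 ∧ finrank K b = 2 ∧
      P ≤ a ∧ P ≤ b ∧ a ≤ ε ∧ b ≤ ε ∧ a ≠ b := by
  have hlt : P < ε := lt_of_le_of_ne hle (fun h => by rw [h] at hP; omega)
  obtain ⟨x, hxε, hxP⟩ := SetLike.exists_of_lt hlt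
  have hx0 : x ≠ 0 := fun h => hxP (h ▸ P.zero_mem)
  have hfra : finrank K ↥(P ⊔ Submodule.span K {x}) = 2 := by
    have h2 := Submodule.finrank_sup_add_finrank_inf_eq P (Submodule.span K {x})
    rw [disjoint_iff.mp (Submodule.disjoint_span_singleton.mpr (fun h => absurd h hxP)),
      finrank_bot, hP, finrank_span_singleton hx0] at h2
    omega
  have haε : P ⊔ Submodule.span K {x} ≤ ε :=
    sup_le hle ((Submodule.span_singleton_le_iff_mem _ _).mpr hxε)
  have hlt2 : P ⊔ Submodule.span K {x} < ε :=
    lt_of_le_of_ne haε (fun h => by rw [h, hε] at hfra; omega)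
  obtain ⟨y, hyε, hya⟩ := SetLike.exists_of_lt hlt2
  have hyP : y ∉ P := fun h => hya (Submodule.mem_sup_left h)
  have hy0 : y ≠ 0 := fun h => hyP (h ▸ P.zero_mem)
  have hfrb : finrank K ↥(P ⊔ Submodule.span K {y}) = 2 := by
    have h2 := Submodule.finrank_sup_add_finrank_inf_eq P (Submodule.span K {y})
    rw [disjoint_iff.mp (Submodule.disjoint_span_singleton.mpr (fun h => absurd h hyP)),
      finrank_bot, hP, finrank_span_singleton hy0] at h2
    omega
  refine ⟨_, _, hfra, hfrb, le_sup_left, le_sup_left, haε,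
    sup_le hle ((Submodule.span_singleton_le_iff_mem _ _).mpr hyε), fun h => hya ?_⟩
  rw [h]
  exact Submodule.mem_sup_right (Submodule.mem_span_singleton_self y)

private lemma keyA [FiniteDimensional K V] {Φ Φ1 Φ2 Ψ : ProjFlag K V}
    (h1pt : Φ1.pt = Φ.pt) (h1pl : Φ1.pl = Φ.pl) (hab : Φ.ln ≠ Φ1.ln)
    (h2 : Φ2.Related Φ) (h2n : ¬(Φ2.pt = Φ.pt ∧ Φ2.pl = Φ.pl))
    (hΨ1 : Ψ.Related Φ1) (hΨ2 : Ψ.Related Φ2)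
    (hΨn : ¬(Ψ.pt = Φ.pt ∧ Ψ.pl = Φ.pl)) : False := by
  push_neg at h2n hΨn
  -- basic geometry: Φ.ln ⊓ Φ1.ln = Φ.pt and Φ.ln ⊔ Φ1.ln = Φ.pl
  have hptb : Φ.pt ≤ Φ1.ln := h1pt ▸ Φ1.pt_le_ln
  have hsupinf := Submodule.finrank_sup_add_finrank_inf_eq Φ.ln Φ1.ln
  rw [Φ.finrank_ln, Φ1.finrank_ln] at hsupinf
  have hinf_le : finrank K ↥(Φ.ln ⊓ Φ1.ln) ≤ 2 := Φ.finrank_ln ▸ Submodule.finrank_mono inf_le_left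
  have hinf_ge : 1 ≤ finrank K ↥(Φ.ln ⊓ Φ1.ln) :=
    Φ.finrank_pt ▸ Submodule.finrank_mono (le_inf Φ.pt_le_ln hptb)
  have hinf_ne : finrank K ↥(Φ.ln ⊓ Φ1.ln) ≠ 2 := by
    intro h
    have heq : Φ.ln ⊓ Φ1.ln = Φ.ln :=
      Submodule.eq_of_le_of_finrank_le inf_le_left (by rw [h, Φ.finrank_ln])
    have : Φ.ln = Φ1.ln :=
      Submodule.eq_of_le_of_finrank_le (inf_eq_left.mp heq) (by rw [Φ.finrank_ln, Φ1.finrank_ln])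
    exact hab this
  have hinf1 : finrank K ↥(Φ.ln ⊓ Φ1.ln) = 1 := by omega
  have hinf_eq : Φ.ln ⊓ Φ1.ln = Φ.pt :=
    (Submodule.eq_of_le_of_finrank_le (le_inf Φ.pt_le_ln hptb)
      (by rw [hinf1, Φ.finrank_pt])).symm
  have hsup_eq : Φ.ln ⊔ Φ1.ln = Φ.pl := by
    refine Submodule.eq_of_le_of_finrank_le (sup_le Φ.ln_le_pl (h1pl ▸ Φ1.ln_le_pl)) ?_
    rw [Φ.finrank_pl]; omega
  rcases h2 with ⟨g1, g2⟩ | ⟨g1, g2⟩ | ⟨g1, g2⟩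
  · -- Φ2 = (Φ.pt, Φ.ln, δ), δ ≠ Φ.pl
    have hδ : Φ2.pl ≠ Φ.pl := h2n g1
    rcases hΨ1 with ⟨k1, k2⟩ | ⟨k1, k2⟩ | ⟨k1, k2⟩
    · -- Ψ = (Φ.pt, Φ1.ln, κ)
      rcases hΨ2 with ⟨l1, l2⟩ | ⟨l1, l2⟩ | ⟨l1, l2⟩
      · exact hab (by rw [← g2, ← l2, k2])
      · -- Ψ.pl = Φ2.pl : then Φ.pl ≤ Φ2.pl
        have hb2 : Φ1.ln ≤ Φ2.pl := by rw [← k2, ← l2]; exact Ψ.ln_le_pl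
        have ha2 : Φ.ln ≤ Φ2.pl := by rw [← g2]; exact Φ2.ln_le_pl
        have hle : Φ.pl ≤ Φ2.pl := hsup_eq ▸ sup_le ha2 hb2
        have : Φ.pl = Φ2.pl :=
          Submodule.eq_of_le_of_finrank_le hle (by rw [Φ2.finrank_pl, Φ.finrank_pl])
        exact hδ this.symm
      · exact hab (by rw [← g2, ← l1, k2])
    · exact hΨn (k1.trans h1pt) (k2.trans h1pl)
    · -- Ψ = (S, Φ1.ln, Φ1.pl)
      have hS : Ψ.pt ≠ Φ.pt := fun h => hΨn h (k2.trans h1pl)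
      rcases hΨ2 with ⟨l1, l2⟩ | ⟨l1, l2⟩ | ⟨l1, l2⟩
      · exact hab (by rw [← g2, ← l2, k1])
      · exact hS (l1.trans g1)
      · exact hab (by rw [← g2, ← l1, k1])
  · exact h2n g1 g2
  · -- Φ2 = (R, Φ.ln, Φ.pl), R ≠ Φ.pt
    have hR : Φ2.pt ≠ Φ.pt := fun h => h2n h g2
    rcases hΨ1 with ⟨k1, k2⟩ | ⟨k1, k2⟩ | ⟨k1, k2⟩
    · rcases hΨ2 with ⟨l1, l2⟩ | ⟨l1, l2⟩ | ⟨l1, l2⟩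
      · exact hR (l1.symm.trans (k1.trans h1pt))
      · exact hR (l1.symm.trans (k1.trans h1pt))
      · exact hab (by rw [← g1, ← l1, k2])
    · exact hΨn (k1.trans h1pt) (k2.trans h1pl)
    · have hS : Ψ.pt ≠ Φ.pt := fun h => hΨn h (k2.trans h1pl)
      rcases hΨ2 with ⟨l1, l2⟩ | ⟨l1, l2⟩ | ⟨l1, l2⟩
      · exact hab (by rw [← g1, ← l2, k1])
      · -- Ψ.pt = Φ2.pt ≤ Φ.ln ⊓ Φ1.ln = Φ.pt
        have hpa : Ψ.pt ≤ Φ.ln := by rw [l1, ← g1]; exact Φ2.pt_le_ln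
        have hpb : Ψ.pt ≤ Φ1.ln := by rw [← k1]; exact Ψ.pt_le_ln
        have : Ψ.pt = Φ.pt :=
          Submodule.eq_of_le_of_finrank_le (hinf_eq ▸ le_inf hpa hpb)
            (by rw [Ψ.finrank_pt, Φ.finrank_pt])
        exact hS this
      · exact hab (by rw [← g1, ← l1, k1])

/-- A Plücker transformation maps every pencil of type 1 onto a pencil of type 1. -/
theorem plucker_image_of_pencil1_isPencil1
    (hV : Module.finrank K V = 4)
    (α : ProjFlag K V → ProjFlag K V) (hbij : Function.Bijective α)
    (hα : ∀ Φ Ψ : ProjFlag K V, Φ.Related Ψ ↔ (α Φ).Related (α Ψ))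
    (P ε : Submodule K V) (hP : Module.finrank K P = 1) (hε : Module.finrank K ε = 3)
    (hPε : P ≤ ε) :
    ∃ P' ε' : Submodule K V, Module.finrank K P' = 1 ∧ Module.finrank K ε' = 3 ∧
      P' ≤ ε' ∧ α '' flagsOfPointPlane P ε = flagsOfPointPlane P' ε' := by
  have hfin : FiniteDimensional K V := FiniteDimensional.of_finrank_eq_succ (n := 3) hV
  obtain ⟨a, b, hfa, hfb, hPa, hPb, haε, hbε, hab⟩ := exists_two_lines hP hε hPε
  set Φa : ProjFlag K V := ⟨P, a, ε, hP, hfa, hε, hPa, haε⟩ with hΦadef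
  set Φb : ProjFlag K V := ⟨P, b, ε, hP, hfb, hε, hPb, hbε⟩ with hΦbdef
  have hΦab : Φa ≠ Φb := fun h => hab (congrArg ProjFlag.ln h)
  have hMa : Φa ∈ flagsOfPointPlane P ε := ⟨rfl, rfl⟩
  have hMb : Φb ∈ flagsOfPointPlane P ε := ⟨rfl, rfl⟩
  have hrel : (α Φa).Related (α Φb) := (hα _ _).mp (Or.inr (Or.inl ⟨rfl, rfl⟩))
  have hane : α Φa ≠ α Φb := fun h => hΦab (hbij.1 h)
  rcases hrel with ⟨e1, e2⟩ | ⟨e1, e2⟩ | ⟨e1, e2⟩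
  · -- images agree in pt and ln: impossible
    exfalso
    have hplne : (α Φa).pl ≠ (α Φb).pl := fun h => hane (flag_eq e1 e2 h)
    obtain ⟨Q, hQ1, hQle, hQne⟩ :=
      exists_point_ne (α Φa).finrank_pt (α Φa).finrank_ln (α Φa).pt_le_ln
    set Θ2 : ProjFlag K V := ⟨Q, (α Φa).ln, (α Φa).pl, hQ1, (α Φa).finrank_ln,
      (α Φa).finrank_pl, hQle, (α Φa).ln_le_pl⟩ with hΘ2def
    set Θψ : ProjFlag K V := ⟨Q, (α Φa).ln, (α Φb).pl, hQ1, (α Φa).finrank_ln,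
      (α Φb).finrank_pl, hQle, by rw [e2]; exact (α Φb).ln_le_pl⟩ with hΘψdef
    obtain ⟨Φ2, hΦ2⟩ := hbij.2 Θ2
    obtain ⟨Ψ, hΨ⟩ := hbij.2 Θψ
    have h2 : Φ2.Related Φa := (hα _ _).mpr (by rw [hΦ2]; exact Or.inr (Or.inr ⟨rfl, rfl⟩))
    have hΨ1 : Ψ.Related Φb := (hα _ _).mpr (by rw [hΨ]; exact Or.inr (Or.inr ⟨e2, rfl⟩))
    have hΨ2 : Ψ.Related Φ2 := (hα _ _).mpr (by rw [hΨ, hΦ2]; exact Or.inl ⟨rfl, rfl⟩)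
    have h2n : ¬(Φ2.pt = Φa.pt ∧ Φ2.pl = Φa.pl) := by
      rintro ⟨m1, m2⟩
      have hr := (hα Φ2 Φb).mp (Or.inr (Or.inl ⟨m1, m2⟩))
      rw [hΦ2] at hr
      rcases hr with ⟨f1, f2⟩ | ⟨f1, f2⟩ | ⟨f1, f2⟩
      · exact hQne (f1.trans e1.symm)
      · exact hQne (f1.trans e1.symm)
      · exact hplne f2
    have hΨn : ¬(Ψ.pt = Φa.pt ∧ Ψ.pl = Φa.pl) := by
      rintro ⟨m1, m2⟩
      have hr := (hα Ψ Φa).mp (Or.inr (Or.inl ⟨m1, m2⟩))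
      rw [hΨ] at hr
      rcases hr with ⟨f1, f2⟩ | ⟨f1, f2⟩ | ⟨f1, f2⟩
      · exact hQne f1
      · exact hQne f1
      · exact hplne f2.symm
    exact keyA (Φ := Φa) (Φ1 := Φb) rfl rfl hab h2 h2n hΨ1 hΨ2 hΨn
  · -- images agree in pt and pl: the good case
    have hlnne : (α Φa).ln ≠ (α Φb).ln := fun h => hane (flag_eq e1 h e2)
    refine ⟨(α Φa).pt, (α Φa).pl, (α Φa).finrank_pt, (α Φa).finrank_pl,
      (α Φa).pt_le_ln.trans (α Φa).ln_le_pl, ?_⟩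
    ext Θ
    constructor
    · rintro ⟨Φ, hΦM, rfl⟩
      have h1 : (α Φ).Related (α Φa) := (hα _ _).mp (Or.inr (Or.inl ⟨hΦM.1, hΦM.2⟩))
      have h2 : (α Φ).Related (α Φb) := (hα _ _).mp (Or.inr (Or.inl ⟨hΦM.1, hΦM.2⟩))
      exact cliqueC e1 e2 hlnne h1 h2
    · intro hΘ
      obtain ⟨Φ, rfl⟩ := hbij.2 Θ
      have h1 : Φ.Related Φa := (hα _ _).mpr (Or.inr (Or.inl ⟨hΘ.1, hΘ.2⟩))
      have h2 : Φ.Related Φb := (hα _ _).mpr (Or.inr (Or.inl ⟨hΘ.1.trans e1, hΘ.2.trans e2⟩))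
      have hc := cliqueC (Ψ1 := Φa) (Ψ2 := Φb) rfl rfl hab h1 h2
      exact ⟨Φ, ⟨hc.1, hc.2⟩, rfl⟩
  · -- images agree in ln and pl: impossible
    exfalso
    have hptne : (α Φa).pt ≠ (α Φb).pt := fun h => hane (flag_eq h e1 e2)
    obtain ⟨δ, hδ3, hδle, hδne⟩ :=
      exists_plane_ne hV (α Φa).finrank_ln (α Φa).finrank_pl (α Φa).ln_le_pl
    set Θ2 : ProjFlag K V := ⟨(α Φa).pt, (α Φa).ln, δ, (α Φa).finrank_pt,
      (α Φa).finrank_ln, hδ3, (α Φa).pt_le_ln, hδle⟩ with hΘ2def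
    set Θψ : ProjFlag K V := ⟨(α Φb).pt, (α Φa).ln, δ, (α Φb).finrank_pt,
      (α Φa).finrank_ln, hδ3, by rw [e1]; exact (α Φb).pt_le_ln, hδle⟩ with hΘψdef
    obtain ⟨Φ2, hΦ2⟩ := hbij.2 Θ2
    obtain ⟨Ψ, hΨ⟩ := hbij.2 Θψ
    have h2 : Φ2.Related Φa := (hα _ _).mpr (by rw [hΦ2]; exact Or.inl ⟨rfl, rfl⟩)
    have hΨ1 : Ψ.Related Φb := (hα _ _).mpr (by rw [hΨ]; exact Or.inl ⟨rfl, e1⟩)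
    have hΨ2 : Ψ.Related Φ2 := (hα _ _).mpr (by rw [hΨ, hΦ2]; exact Or.inr (Or.inr ⟨rfl, rfl⟩))
    have h2n : ¬(Φ2.pt = Φa.pt ∧ Φ2.pl = Φa.pl) := by
      rintro ⟨m1, m2⟩
      have hr := (hα Φ2 Φb).mp (Or.inr (Or.inl ⟨m1, m2⟩))
      rw [hΦ2] at hr
      rcases hr with ⟨f1, f2⟩ | ⟨f1, f2⟩ | ⟨f1, f2⟩
      · exact hptne f1
      · exact hptne f1
      · exact hδne (f2.trans e2.symm)
    have hΨn : ¬(Ψ.pt = Φa.pt ∧ Ψ.pl = Φa.pl) := by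
      rintro ⟨m1, m2⟩
      have hr := (hα Ψ Φa).mp (Or.inr (Or.inl ⟨m1, m2⟩))
      rw [hΨ] at hr
      rcases hr with ⟨f1, f2⟩ | ⟨f1, f2⟩ | ⟨f1, f2⟩
      · exact hptne f1.symm
      · exact hptne f1.symm
      · exact hδne f2
    exact keyA (Φ := Φa) (Φ1 := Φb) rfl rfl hab h2 h2n hΨ1 hΨ2 hΨn
end
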